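/- A Laurent polynomial f ∈ ℤ[t,t⁻¹] satisfies f(1) = 0 and f(t) = f(t⁻¹) if and only if f lies in the ℤ-submodule of ℤ[t,t⁻¹] generated by the set {t^k − 2 + t^{−k} : k ≥ 1}; equivalently, if and only if f can be written as a finite integer combination f(t) = Σ_{k>0} c_k (t^k − 2 + t^{−k}). -/

import Mathlib

/-!
Both conditions cut out a submodule containing every `t^k - 2 + t^(-k)`. Conversely, for `f` in
that submodule the difference `g = f - ∑_{n>0} f_n (t^n - 2 + t^(-n))` stays in it and has no
coefficients in positive degrees, hence by symmetry none in nonzero degrees; so `g` is a constant,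
equal to its value `g(1) = 0`.
-/

open LaurentPolynomial

/-- Evaluation of a Laurent polynomial at `t = 1`, i.e. the sum of its coefficients. -/
def evalOne (f : LaurentPolynomial ℤ) : ℤ := f.coeff.sum fun _ c => c

namespace LaurentPolynomial

lemma eq_C_coeff_zero_of_coeff_eq_zero {R : Type*} [Semiring R] {f : R[T;T⁻¹]}
    (h : ∀ n ≠ 0, f.coeff n = 0) : f = C (f.coeff 0) := by
  ext n
  rw [C_apply]
  split_ifs with hn
  · rw [hn]
  · exact h n hn

lemma coeff_T_sub_two_add_T_neg_of_pos {R : Type*} [Ring R] {k m : ℤ} (hk : 0 < k)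
    (hm : 0 < m) : (T k - 2 + T (-k) : R[T;T⁻¹]).coeff m = if k = m then 1 else 0 := by
  rw [← map_ofNat C 2]
  simp [AddMonoidAlgebra.coeff_add, AddMonoidAlgebra.coeff_sub, hm.ne', show -k ≠ m by omega]

end LaurentPolynomial

lemma evalOne_eq_leval (f : ℤ[T;T⁻¹]) : evalOne f = leval ℤ (1 : ℤˣ) f := by
  simp [evalOne, smeval]

lemma evalOne_C (a : ℤ) : evalOne (C a) = a := by
  rw [evalOne_eq_leval, leval_apply, smeval_C, smul_eq_mul, mul_one]

noncomputable def reciprocalKerEvalOne : Submodule ℤ ℤ[T;T⁻¹] :=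
  LinearMap.ker (leval ℤ (1 : ℤˣ)) ⊓ LinearMap.eqLocus invert.toLinearMap LinearMap.id

lemma mem_reciprocalKerEvalOne {f : ℤ[T;T⁻¹]} :
    f ∈ reciprocalKerEvalOne ↔ evalOne f = 0 ∧ invert f = f := by
  simp [reciprocalKerEvalOne, evalOne_eq_leval]

lemma T_sub_two_add_T_neg_mem_reciprocalKerEvalOne (k : ℤ) :
    T k - 2 + T (-k) ∈ reciprocalKerEvalOne := by
  rw [mem_reciprocalKerEvalOne, ← map_ofNat C 2]
  constructor
  · simp only [evalOne_eq_leval, map_add, map_sub, leval_apply, smeval_T_pow, smeval_C, one_zpow,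
      Units.val_one, smul_eq_mul, mul_one]
    norm_num
  · rw [map_add, map_sub, invert_T, invert_T, invert_C, neg_neg]
    abel

lemma eq_zero_of_mem_reciprocalKerEvalOne {f : ℤ[T;T⁻¹]} (hf : f ∈ reciprocalKerEvalOne)
    (hpos : ∀ n, 0 < n → f.coeff n = 0) : f = 0 := by
  obtain ⟨hev, hinv⟩ := mem_reciprocalKerEvalOne.1 hf
  have hcoeff : ∀ n ≠ 0, f.coeff n = 0 := fun n hn ↦ by
    rcases hn.lt_or_gt with hn | hn
    · rw [← hinv, invert_apply, hpos _ (neg_pos.2 hn)]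
    · exact hpos n hn
  have hC := eq_C_coeff_zero_of_coeff_eq_zero hcoeff
  rw [hC, evalOne_C] at hev
  rw [hC, hev, map_zero]

lemma span_le_reciprocalKerEvalOne :
    Submodule.span ℤ {g : ℤ[T;T⁻¹] | ∃ k : ℤ, 1 ≤ k ∧ g = T k - 2 + T (-k)} ≤
      reciprocalKerEvalOne :=
  Submodule.span_le.2 <| by
    rintro _ ⟨k, -, rfl⟩
    exact T_sub_two_add_T_neg_mem_reciprocalKerEvalOne k

lemma mem_span_of_mem_reciprocalKerEvalOne {f : ℤ[T;T⁻¹]} (hf : f ∈ reciprocalKerEvalOne) :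
    f ∈ Submodule.span ℤ {g : ℤ[T;T⁻¹] | ∃ k : ℤ, 1 ≤ k ∧ g = T k - 2 + T (-k)} := by
  set s := f.coeff.support.filter (0 < ·)
  set P := ∑ n ∈ s, f.coeff n • (T n - 2 + T (-n) : ℤ[T;T⁻¹])
  have hP : P ∈ Submodule.span ℤ {g : ℤ[T;T⁻¹] | ∃ k : ℤ, 1 ≤ k ∧ g = T k - 2 + T (-k)} :=
    Submodule.sum_mem _ fun n hn ↦ Submodule.smul_mem _ _ <|
      Submodule.subset_span ⟨n, (Finset.mem_filter.1 hn).2, rfl⟩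
  have hPcoeff : ∀ m, 0 < m → P.coeff m = f.coeff m := fun m hm ↦ by
    calc P.coeff m = ∑ n ∈ s, if n = m then f.coeff n else 0 := by
          rw [AddMonoidAlgebra.coeff_sum, Finset.sum_apply']
          refine Finset.sum_congr rfl fun n hn ↦ ?_
          rw [AddMonoidAlgebra.coeff_smul_apply,
            coeff_T_sub_two_add_T_neg_of_pos (Finset.mem_filter.1 hn).2 hm, smul_eq_mul, mul_boole]
      _ = f.coeff m := by
          rw [Finset.sum_ite_eq']
          split_ifs with hms
          · rfl
          · simpa [s, hm, eq_comm] using hms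
  suffices f - P = 0 from sub_eq_zero.1 this ▸ hP
  refine eq_zero_of_mem_reciprocalKerEvalOne (sub_mem hf ?_) fun m hm ↦ ?_
  · exact span_le_reciprocalKerEvalOne hP
  · rw [AddMonoidAlgebra.coeff_sub, Finsupp.sub_apply, hPcoeff m hm, sub_self]

/-- A Laurent polynomial `f ∈ ℤ[t,t⁻¹]` satisfies `f(1) = 0` and `f(t) = f(t⁻¹)` iff
`f` lies in the `ℤ`-submodule generated by `{t^k − 2 + t^{−k} : k ≥ 1}`. -/
theorem evalOne_eq_zero_and_reciprocal_iff_mem_span (f : LaurentPolynomial ℤ) :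
    (evalOne f = 0 ∧ invert f = f) ↔
      f ∈ Submodule.span ℤ
        {g : LaurentPolynomial ℤ | ∃ k : ℤ, 1 ≤ k ∧ g = T k - 2 + T (-k)} :=
  ⟨fun h ↦ mem_span_of_mem_reciprocalKerEvalOne (mem_reciprocalKerEvalOne.2 h),
    fun h ↦ mem_reciprocalKerEvalOne.1 (span_le_reciprocalKerEvalOne h)⟩
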